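/- Soundness of P[⊥_w] for universal-key models: if Γ ⊢ φ in P[⊥_w] and M is closed (including the condition: ff ∈ M and enc(a,b) ∈ M imply b ∈ M) with v(Γ) ⊆ M, then v(φ) ∈ M. -/

import Mathlib

/-- Infons: formulas built from atoms, ⊤, ⊥, conjunction and primal implication. -/
inductive Infon : Type
  | atom : ℕ → Infon
  | top : Infon
  | bot : Infon
  | and : Infon → Infon → Infon
  | imp : Infon → Infon → Infon
deriving DecidableEq

/-- Derivability in the basic primal infon logic P (⊥ is an ordinary atom, no rule for it). -/
inductive DerP : Set Infon → Infon → Prop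
  | top (Γ : Set Infon) : DerP Γ .top
  | id (φ : Infon) : DerP {φ} φ
  | weak {Γ φ} (Δ : Set Infon) : DerP Γ φ → DerP (Γ ∪ Δ) φ
  | cut {Γ φ ψ} : DerP Γ φ → DerP (insert φ Γ) ψ → DerP Γ ψ
  | andI {Γ φ ψ} : DerP Γ φ → DerP Γ ψ → DerP Γ (.and φ ψ)
  | andE1 {Γ φ ψ} : DerP Γ (.and φ ψ) → DerP Γ φ
  | andE2 {Γ φ ψ} : DerP Γ (.and φ ψ) → DerP Γ ψ
  | impI {Γ ψ} (φ : Infon) : DerP Γ ψ → DerP Γ (.imp φ ψ)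
  | impE {Γ φ ψ} : DerP Γ φ → DerP Γ (.imp φ ψ) → DerP Γ ψ

/-- Derivability in P[⊥_w]: P plus the weak ⊥-elimination rule. -/
inductive DerW : Set Infon → Infon → Prop
  | top (Γ : Set Infon) : DerW Γ .top
  | id (φ : Infon) : DerW {φ} φ
  | weak {Γ φ} (Δ : Set Infon) : DerW Γ φ → DerW (Γ ∪ Δ) φ
  | cut {Γ φ ψ} : DerW Γ φ → DerW (insert φ Γ) ψ → DerW Γ ψ
  | andI {Γ φ ψ} : DerW Γ φ → DerW Γ ψ → DerW Γ (.and φ ψ)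
  | andE1 {Γ φ ψ} : DerW Γ (.and φ ψ) → DerW Γ φ
  | andE2 {Γ φ ψ} : DerW Γ (.and φ ψ) → DerW Γ ψ
  | impI {Γ ψ} (φ : Infon) : DerW Γ ψ → DerW Γ (.imp φ ψ)
  | impE {Γ φ ψ} : DerW Γ φ → DerW Γ (.imp φ ψ) → DerW Γ ψ
  | botEw {Γ φ ψ} : DerW Γ .bot → DerW Γ (.imp φ ψ) → DerW Γ ψ

/-- Positive atoms of an infon. -/
def posAt : Infon → Set Infon
  | .and φ ψ => posAt φ ∪ posAt ψ
  | .imp _ ψ => posAt ψ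
  | φ => {φ}

/-- Positive atoms of a context. -/
def posCtx (Γ : Set Infon) : Set Infon := ⋃ φ ∈ Γ, posAt φ

/-- Strings over the alphabet Σ ∪ {ff}: the letter `none` is the extra letter ff. -/
abbrev StrB := List (Option Bool)

/-- The one-letter string ff. -/
def ffStr : StrB := [none]

/-- An infon algebra over strings in the alphabet Σ ∪ {ff}. -/
structure InfonAlgebraB where
  pi : StrB → StrB → StrB
  l : StrB → Option StrB
  r : StrB → Option StrB
  enc : StrB → StrB → StrB
  dec : StrB → StrB → Option StrB
  E : Set StrB
  E_nonempty : E.Nonempty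
  E_binary : ∀ x ∈ E, ∀ c ∈ x, c ≠ none
  l_pi : ∀ x y, l (pi x y) = some x
  r_pi : ∀ x y, r (pi x y) = some y
  dec_enc : ∀ x y, dec x (enc x y) = some y

/-- An interpretation: evaluation of infons with v(⊥) = ff, v(⊤) ∈ E,
∧ evaluated by pairing and primal → by encryption; atoms and ⊤ get binary strings. -/
structure InterpB (A : InfonAlgebraB) where
  v : Infon → StrB
  v_top : v .top ∈ A.E
  v_bot : v .bot = ffStr
  v_atom : ∀ n, ∀ c ∈ v (.atom n), c ≠ none
  v_and : ∀ φ ψ, v (.and φ ψ) = A.pi (v φ) (v ψ)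
  v_imp : ∀ φ ψ, v (.imp φ ψ) = A.enc (v φ) (v ψ)

/-- The basic closure conditions on M (conditions for P-connectives). -/
def BaseClosed (A : InfonAlgebraB) (M : Set StrB) : Prop :=
  A.E ⊆ M ∧
  (∀ a b, (a ∈ M ∧ b ∈ M) ↔ A.pi a b ∈ M) ∧
  (∀ a b, a ∈ M → A.enc a b ∈ M → b ∈ M) ∧
  (∀ a b, b ∈ M → A.enc a b ∈ M)

/-- Closure for universal-key models: base conditions plus:
ff ∈ M and enc(a,b) ∈ M imply b ∈ M. -/
def ClosedUK (A : InfonAlgebraB) (M : Set StrB) : Prop :=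
  BaseClosed A M ∧ (∀ a b, ffStr ∈ M → A.enc a b ∈ M → b ∈ M)

/-! Induction on the derivation: each rule of P is matched by one of the base closure conditions,
and weak ⊥-elimination is sound because `v ⊥ = ff` and the universal-key condition lets `ff`
open every ciphertext in `M`. -/

namespace BaseClosed

variable {A : InfonAlgebraB} {M : Set StrB}

theorem top_mem (hM : BaseClosed A M) (I : InterpB A) : I.v .top ∈ M :=
  hM.1 I.v_top

theorem and_mem_iff (hM : BaseClosed A M) (I : InterpB A) {φ ψ : Infon} :
    I.v (.and φ ψ) ∈ M ↔ I.v φ ∈ M ∧ I.v ψ ∈ M := by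
  rw [I.v_and]
  exact (hM.2.1 _ _).symm

theorem imp_mem (hM : BaseClosed A M) (I : InterpB A) {φ ψ : Infon} (hψ : I.v ψ ∈ M) :
    I.v (.imp φ ψ) ∈ M :=
  I.v_imp φ ψ ▸ hM.2.2.2 _ _ hψ

theorem mem_of_imp_mem (hM : BaseClosed A M) (I : InterpB A) {φ ψ : Infon} (hφ : I.v φ ∈ M)
    (hφψ : I.v (.imp φ ψ) ∈ M) : I.v ψ ∈ M :=
  hM.2.2.1 _ _ hφ (I.v_imp φ ψ ▸ hφψ)

end BaseClosed

theorem ClosedUK.mem_of_bot_mem_of_imp_mem {A : InfonAlgebraB} {M : Set StrB} (hM : ClosedUK A M)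
    (I : InterpB A) {φ ψ : Infon} (hbot : I.v .bot ∈ M) (hφψ : I.v (.imp φ ψ) ∈ M) :
    I.v ψ ∈ M :=
  hM.2 _ _ (I.v_bot ▸ hbot) (I.v_imp φ ψ ▸ hφψ)

/-- Soundness of P[⊥_w] for universal-key models. -/
theorem universal_key_soundness (Γ : Set Infon) (φ : Infon) (h : DerW Γ φ)
    (A : InfonAlgebraB) (I : InterpB A) (M : Set StrB) (hM : ClosedUK A M)
    (hΓ : ∀ ψ ∈ Γ, I.v ψ ∈ M) : I.v φ ∈ M := by
  induction h with
  | top => exact hM.1.top_mem I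
  | id φ => exact hΓ φ rfl
  | weak _ _ ih => exact ih fun ψ hψ => hΓ ψ (Or.inl hψ)
  | cut _ _ ih₁ ih₂ => exact ih₂ (Set.forall_mem_insert.2 ⟨ih₁ hΓ, hΓ⟩)
  | andI _ _ ih₁ ih₂ => exact (hM.1.and_mem_iff I).2 ⟨ih₁ hΓ, ih₂ hΓ⟩
  | andE1 _ ih => exact ((hM.1.and_mem_iff I).1 (ih hΓ)).1
  | andE2 _ ih => exact ((hM.1.and_mem_iff I).1 (ih hΓ)).2
  | impI _ _ ih => exact hM.1.imp_mem I (ih hΓ)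
  | impE _ _ ih₁ ih₂ => exact hM.1.mem_of_imp_mem I (ih₁ hΓ) (ih₂ hΓ)
  | botEw _ _ ih₁ ih₂ => exact hM.mem_of_bot_mem_of_imp_mem I (ih₁ hΓ) (ih₂ hΓ)
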